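/- The skeleton map from DAGs to undirected graphs is invariant under Markov equivalence: if two DAGs induce the same d-separation relations, then they have the same skeleton. -/

import Mathlib

variable {V : Type*}

/-- Two nodes are adjacent in a directed graph if there is an edge in either direction. -/
def Adj (E : V → V → Prop) (a b : V) : Prop := E a b ∨ E b a

/-- A directed graph is acyclic if no vertex lies on a directed cycle. -/
def Acyclic (E : V → V → Prop) : Prop := ∀ v, ¬ Relation.TransGen E v v

/-- `b` is a descendant of `a` (including `a` itself): there is a directed path from
`a` to `b`. -/
def Descendant (E : V → V → Prop) (a b : V) : Prop := Relation.ReflTransGen E a b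

/-- The set of parents of a node. -/
def Parents (E : V → V → Prop) (v : V) : Set V := {u | E u v}

/-- A list of vertices is a trail (an undirected path) if consecutive vertices are
adjacent in the skeleton. -/
def IsTrail (E : V → V → Prop) : List V → Prop
  | [] => False
  | [_] => True
  | a :: b :: l => Adj E a b ∧ IsTrail E (b :: l)

/-- In a consecutive triple `x, y, z` of a trail, the middle node `y` is a collider if
both edges point into it: `x → y ← z`. -/
def Collider (E : V → V → Prop) (x y z : V) : Prop := E x y ∧ E z y

/-- A consecutive triple `x, y, z` is blocked by the conditioning set `S` if either the
middle node is a collider and neither it nor any of its descendants lies in `S`, or the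
middle node is a non-collider lying in `S`. -/
def BlockedTriple (E : V → V → Prop) (S : Set V) (x y z : V) : Prop :=
  (Collider E x y z ∧ ∀ d, Descendant E y d → d ∉ S) ∨ (¬ Collider E x y z ∧ y ∈ S)

/-- A trail `p` is blocked by `S` if some consecutive triple of `p` is blocked by `S`. -/
def Blocked (E : V → V → Prop) (S : Set V) (p : List V) : Prop :=
  ∃ i x y z, p[(i : ℕ)]? = some x ∧ p[i + 1]? = some y ∧ p[i + 2]? = some z ∧
    BlockedTriple E S x y z

/-- `a` and `b` are d-separated by `S`: every (self-avoiding) trail from `a` to `b` is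
blocked by `S`. -/
def DSep (E : V → V → Prop) (S : Set V) (a b : V) : Prop :=
  ∀ p : List V, IsTrail E p → p.head? = some a → p.getLast? = some b → p.Nodup →
    Blocked E S p

/-!
Adjacent vertices are never d-separated: the one-edge trail between them has no inner vertex
that could block it. Conversely, if `a` and `b` are not adjacent in a DAG, one of them, say `b`,
is not an ancestor of the other, and the parents of `b` d-separate them. On a trail from `a` to
`b`, either the last edge enters `b`, and its other end is a conditioned non-collider, or it
leaves `b`; then follow the edges pointing away from `b` back along the trail. Since `a` is not a
descendant of `b`, this directed run stops at a collider descending from `b`, and no descendant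
of that collider is a parent of `b`, as that would close a cycle.
-/

section DSeparation

variable {E : V → V → Prop} {S : Set V} {a b x y z : V} {p : List V}

theorem isTrail_iff_isChain : IsTrail E p ↔ p ≠ [] ∧ p.IsChain (Adj E) := by
  induction p with
  | nil => simp [IsTrail]
  | cons u l ih =>
    cases l with
    | nil => simp [IsTrail]
    | cons v l => simp [IsTrail, ih]

theorem Adj.symm (h : Adj E a b) : Adj E b a := Or.symm h

theorem IsTrail.reverse (hp : IsTrail E p) : IsTrail E p.reverse := by
  rw [isTrail_iff_isChain] at hp ⊢
  exact ⟨by simpa using hp.1, List.isChain_reverse.2 (hp.2.imp fun _ _ => Adj.symm)⟩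

theorem BlockedTriple.symm (h : BlockedTriple E S x y z) : BlockedTriple E S z y x := by
  unfold BlockedTriple Collider at *
  tauto

theorem Blocked.reverse (h : Blocked E S p) : Blocked E S p.reverse := by
  obtain ⟨i, x, y, z, hx, hy, hz, hxyz⟩ := h
  have hi : i + 2 < p.length := (List.getElem?_eq_some_iff.1 hz).1
  refine ⟨p.length - 1 - (i + 2), z, y, x, ?_, ?_, ?_, hxyz.symm⟩
  · rwa [List.getElem?_reverse' (j := i + 2) (by omega)]
  · rwa [List.getElem?_reverse' (j := i + 1) (by omega)]
  · rwa [List.getElem?_reverse' (j := i) (by omega)]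

theorem DSep.symm (h : DSep E S a b) : DSep E S b a := fun p hp ha hb hnd => by
  have := h p.reverse hp.reverse (by simpa using hb) (by simpa using ha) (List.nodup_reverse.2 hnd)
  simpa using this.reverse

theorem Blocked.cons (h : Blocked E S p) (u : V) : Blocked E S (u :: p) := by
  obtain ⟨i, x, y, z, hx, hy, hz, hxyz⟩ := h
  exact ⟨i + 1, x, y, z, hx, hy, hz, hxyz⟩

theorem BlockedTriple.blocked (h : BlockedTriple E S x y z) (l : List V) :
    Blocked E S (x :: y :: z :: l) :=
  ⟨0, x, y, z, rfl, rfl, rfl, h⟩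

theorem not_blocked_pair : ¬ Blocked E S [a, b] := by
  rintro ⟨i, x, y, z, -, -, hz, -⟩
  simp at hz

theorem not_dsep_of_adj (h : Adj E a b) (hne : a ≠ b) : ¬ DSep E S a b := fun hd =>
  not_blocked_pair (hd [a, b] ⟨h, trivial⟩ rfl rfl (by simpa using hne))

end DSeparation

namespace Acyclic

variable {E : V → V → Prop} {a b : V}

theorem not_adj_self (hE : Acyclic E) (a : V) : ¬ Adj E a a := fun h =>
  hE a (.single (h.elim id id))

theorem not_descendant_of_descendant (hE : Acyclic E) (hne : a ≠ b) (h : Descendant E a b) :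
    ¬ Descendant E b a := fun h' =>
  hE a ((Relation.reflTransGen_iff_eq_or_transGen.1 h).resolve_left hne.symm |>.trans_left h')

theorem blocked_parents_or (hE : Acyclic E) {l : List V} {x y : V}
    (hp : IsTrail E (x :: y :: l)) (hl : (x :: y :: l).getLast? = some b) :
    Blocked E (Parents E b) (x :: y :: l) ∨ (E y x ∧ Descendant E b x) ∨
      (y = b ∧ E x b) := by
  induction l generalizing x y with
  | nil =>
    obtain rfl : y = b := by simpa using hl
    rcases hp.1 with hxy | hyx
    · exact .inr (.inr ⟨rfl, hxy⟩)
    · exact .inr (.inl ⟨hyx, .single hyx⟩)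
  | cons z l ih =>
    obtain ⟨hxy, hp⟩ := hp
    rcases ih hp (by simpa using hl) with hbl | ⟨hzy, hby⟩ | ⟨rfl, hyb⟩
    · exact .inl (hbl.cons x)
    · rcases hxy with hxy | hyx
      · refine .inl (BlockedTriple.blocked (.inl ⟨⟨hxy, hzy⟩, fun d hyd hdb => ?_⟩) l)
        exact hE b (.tail' (hby.trans hyd) hdb)
      · exact .inr (.inl ⟨hyx, hby.tail hyx⟩)
    · refine .inl (BlockedTriple.blocked ?_ l)
      exact .inr ⟨fun hc => hE y (.tail (.single hyb) hc.2), hyb⟩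

theorem dsep_parents (hE : Acyclic E) (hadj : ¬ Adj E a b) (hba : ¬ Descendant E b a) :
    DSep E (Parents E b) a b := by
  rintro (_ | ⟨x, _ | ⟨y, l⟩⟩) hp ha hb -
  · exact hp.elim
  · obtain rfl : x = a := by simpa using ha
    obtain rfl : x = b := by simpa using hb
    exact absurd .refl hba
  · obtain rfl : x = a := by simpa using ha
    rcases hE.blocked_parents_or hp hb with hbl | ⟨-, hdesc⟩ | ⟨rfl, hxy⟩
    · exact hbl
    · exact absurd hdesc hba
    · exact absurd (.inl hxy) hadj

theorem adj_iff_forall_not_dsep (hE : Acyclic E) (hne : a ≠ b) :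
    Adj E a b ↔ ∀ S, ¬ DSep E S a b := by
  refine ⟨fun h S => not_dsep_of_adj h hne, fun h => by_contra fun hadj => ?_⟩
  by_cases hba : Descendant E b a
  · exact h _ (hE.dsep_parents (fun h' => hadj h'.symm)
      (hE.not_descendant_of_descendant hne.symm hba)).symm
  · exact h _ (hE.dsep_parents hadj hba)

end Acyclic

theorem same_dsep_same_skeleton_general {V : Type*} (E₁ E₂ : V → V → Prop)
    (hacyc₁ : Acyclic E₁) (hacyc₂ : Acyclic E₂)
    (hdsep : ∀ (S : Set V) (a b : V), DSep E₁ S a b ↔ DSep E₂ S a b) :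
    ∀ a b, Adj E₁ a b ↔ Adj E₂ a b := by
  intro a b
  rcases eq_or_ne a b with rfl | hne
  · exact iff_of_false (hacyc₁.not_adj_self a) (hacyc₂.not_adj_self a)
  · simp only [hacyc₁.adj_iff_forall_not_dsep hne, hacyc₂.adj_iff_forall_not_dsep hne, hdsep]

/-- The skeleton is invariant under Markov equivalence: if two DAGs on the same finite
vertex set induce the same d-separation relations, then they have the same skeleton
(the same adjacency relation obtained by forgetting edge directions). -/
theorem same_dsep_same_skeleton {V : Type*} [Fintype V] (E₁ E₂ : V → V → Prop)
    (hacyc₁ : Acyclic E₁) (hacyc₂ : Acyclic E₂)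
    (hdsep : ∀ (S : Set V) (a b : V), DSep E₁ S a b ↔ DSep E₂ S a b) :
    ∀ a b, Adj E₁ a b ↔ Adj E₂ a b :=
  same_dsep_same_skeleton_general E₁ E₂ hacyc₁ hacyc₂ hdsep
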